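/- arXiv:2205.04241 — 5 statements merged into one kernel-verified Lean document; each statement's English description precedes it below -/
import Mathlib

section
/- Let α be a positive real number that is not an integer, set m = ⌊α⌋, and let u be a nonzero real number. Then the set of nonzero complex numbers z with z^α = u (principal power) is finite, and its cardinality equals m + 1 if either (u > 0 and m is even) or (u < 0 and m is odd), and equals m otherwise. -/
open Complex

open scoped Real

/-! Taking principal logarithms, `z ^ α = u` with `z ≠ 0` says `α Log z = Log u + 2πik` for some
integer `k`. So the solutions are the `exp ((Log u + 2πik) / α)` whose exponent lies in the strip
`-π < Im w ≤ π`, where `Log ∘ exp = id`, and distinct `k` give distinct solutions. The strip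
condition reads `-α < arg u / π + 2k ≤ α`, and `arg u / π` is `0` or `1` according to the sign
of `u`; hence one counts the integers of a fixed parity in `(-α, α]`, that is in `[-m, m]`:
there are `m + 1` of the parity of `m` and `m` of the other parity. -/

namespace Complex

theorem cpow_eq_iff_exists_int {z v s : ℂ} (hz : z ≠ 0) (hv : v ≠ 0) :
    z ^ s = v ↔ ∃ k : ℤ, s * log z = log v + k * (2 * π * I) := by
  conv_lhs => rw [cpow_def_of_ne_zero hz, ← exp_log hv, exp_eq_exp_iff_exists_int]
  simp only [mul_comm s]

noncomputable def cpowRootLog (v : ℂ) (α : ℝ) (k : ℤ) : ℂ :=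
  (log v + k * (2 * π * I)) / α

theorem im_cpowRootLog (v : ℂ) (α : ℝ) (k : ℤ) :
    (cpowRootLog v α k).im = (arg v + 2 * π * k) / α := by
  simp only [cpowRootLog, div_ofReal_im, add_im, log_im, mul_im, intCast_re, intCast_im,
    mul_re, ofReal_re, ofReal_im, re_ofNat, im_ofNat, I_re, I_im]
  ring

theorem cpowRootLog_injective {v : ℂ} {α : ℝ} (hα : α ≠ 0) :
    Function.Injective (cpowRootLog v α) := by
  intro k j h
  have him := congrArg im h
  rw [im_cpowRootLog, im_cpowRootLog, div_left_inj' hα, add_right_inj,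
    mul_right_inj' (by positivity)] at him
  exact_mod_cast him

theorem cpow_ofReal_eq_iff {z v : ℂ} {α : ℝ} (hz : z ≠ 0) (hv : v ≠ 0) (hα : α ≠ 0) :
    z ^ (α : ℂ) = v ↔ ∃ k : ℤ, log z = cpowRootLog v α k := by
  simp only [cpow_eq_iff_exists_int hz hv, cpowRootLog, eq_div_iff (ofReal_ne_zero.2 hα),
    mul_comm (log z)]

theorem bijOn_exp_cpowRootLog {v : ℂ} {α : ℝ} (hv : v ≠ 0) (hα : α ≠ 0) :
    Set.BijOn (fun k => exp (cpowRootLog v α k))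
      {k : ℤ | (cpowRootLog v α k).im ∈ Set.Ioc (-π) π}
      {z : ℂ | z ≠ 0 ∧ z ^ (α : ℂ) = v} := by
  refine ⟨fun k hk => ?_, fun k hk j hj hkj => ?_, fun z ⟨hz, hzv⟩ => ?_⟩
  · have hlog : log (exp (cpowRootLog v α k)) = cpowRootLog v α k := log_exp hk.1 hk.2
    exact ⟨exp_ne_zero _, (cpow_ofReal_eq_iff (exp_ne_zero _) hv hα).2 ⟨k, hlog⟩⟩
  · have := congrArg log hkj
    rw [log_exp hk.1 hk.2, log_exp hj.1 hj.2] at this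
    exact cpowRootLog_injective hα this
  · obtain ⟨k, hk⟩ := (cpow_ofReal_eq_iff hz hv hα).1 hzv
    refine ⟨k, ?_, ?_⟩
    · rw [Set.mem_ofPred_eq, ← hk]
      exact ⟨neg_pi_lt_log_im z, log_im_le_pi z⟩
    · simp only [← hk, exp_log hz]

theorem setOf_im_cpowRootLog_mem_Ioc {v : ℂ} {α : ℝ} (hα : 0 < α) :
    {k : ℤ | (cpowRootLog v α k).im ∈ Set.Ioc (-π) π} =
      Set.Ioc ⌊(-α - arg v / π) / 2⌋ ⌊(α - arg v / π) / 2⌋ := by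
  set t := arg v / π
  have harg : arg v = π * t := (mul_div_cancel₀ _ Real.pi_ne_zero).symm
  rw [← Int.preimage_Ioc]
  ext k
  simp only [Set.mem_preimage, Set.mem_Ioc, Set.mem_ofPred_eq, im_cpowRootLog, harg,
    lt_div_iff₀ hα, div_le_iff₀ hα]
  constructor <;> rintro ⟨h₁, h₂⟩ <;> constructor <;> nlinarith [Real.pi_pos]

theorem finite_and_ncard_setOf_cpow_ofReal_eq {v : ℂ} {α : ℝ} (hv : v ≠ 0) (hα : 0 < α) :
    {z : ℂ | z ≠ 0 ∧ z ^ (α : ℂ) = v}.Finite ∧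
      {z : ℂ | z ≠ 0 ∧ z ^ (α : ℂ) = v}.ncard =
        (⌊(α - arg v / π) / 2⌋ - ⌊(-α - arg v / π) / 2⌋).toNat := by
  have hbij := bijOn_exp_cpowRootLog hv hα.ne'
  rw [setOf_im_cpowRootLog_mem_Ioc hα, ← Finset.coe_Ioc] at hbij
  refine ⟨hbij.image_eq ▸ (Finset.finite_toSet _).image _, ?_⟩
  rw [← hbij.ncard_eq, Set.ncard_coe_finset, Int.card_Ioc]

end Complex

theorem Int.floor_half_sub_floor_half_neg {α : ℝ} (hα : ∀ n : ℤ, α ≠ n) (t : ℤ) :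
    ⌊(α - t) / 2⌋ - ⌊(-α - t) / 2⌋ = if Even (⌊α⌋ - t) then ⌊α⌋ + 1 else ⌊α⌋ := by
  have hlt : (⌊α⌋ : ℝ) < α := (Int.floor_le α).lt_of_ne fun h => hα _ h.symm
  have hgt : α < ⌊α⌋ + 1 := Int.lt_floor_add_one α
  obtain ⟨q, hq⟩ := Int.even_or_odd' (⌊α⌋ - t)
  have hq₁ : ((2 * q + t : ℤ) : ℝ) ≤ ⌊α⌋ := by exact_mod_cast (by omega : 2 * q + t ≤ ⌊α⌋)
  have hq₂ : (⌊α⌋ : ℝ) + 1 ≤ ((2 * q + t + 2 : ℤ) : ℝ) := by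
    exact_mod_cast (by omega : ⌊α⌋ + 1 ≤ 2 * q + t + 2)
  push_cast at hq₁ hq₂
  have h₁ : ⌊(α - t) / 2⌋ = q := Int.floor_eq_iff.2 ⟨by linarith, by linarith⟩
  have h₂ : ⌊(-α - t) / 2⌋ = -q - t - 1 :=
    Int.floor_eq_iff.2 ⟨by push_cast; linarith, by push_cast; linarith⟩
  simp only [h₁, h₂, Int.even_iff]
  split_ifs <;> omega

/-- For a positive non-integer real exponent `α` with `m = ⌊α⌋` and a nonzero real `u`,
the set of nonzero complex solutions of the principal-power equation `z ^ α = u` is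
finite, of cardinality `m + 1` when (`u > 0` and `m` even) or (`u < 0` and `m` odd),
and of cardinality `m` otherwise. -/
theorem card_roots_real_exponent (α : ℝ) (hα : 0 < α) (hni : ∀ n : ℤ, α ≠ n) (u : ℝ)
    (hu : u ≠ 0) :
    {z : ℂ | z ≠ 0 ∧ z ^ (α : ℂ) = (u : ℂ)}.Finite ∧
    {z : ℂ | z ≠ 0 ∧ z ^ (α : ℂ) = (u : ℂ)}.ncard =
      if (0 < u ∧ Even ⌊α⌋) ∨ (u < 0 ∧ Odd ⌊α⌋) then ⌊α⌋.toNat + 1 else ⌊α⌋.toNat := by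
  obtain ⟨hfin, hcard⟩ := finite_and_ncard_setOf_cpow_ofReal_eq (ofReal_ne_zero.2 hu) hα
  refine ⟨hfin, hcard.trans ?_⟩
  obtain ⟨t, ht, hparity⟩ : ∃ t : ℤ, arg u / π = t ∧
      ((0 < u ∧ Even ⌊α⌋) ∨ (u < 0 ∧ Odd ⌊α⌋) ↔ Even (⌊α⌋ - t)) := by
    rcases hu.lt_or_gt with hneg | hpos
    · refine ⟨1, by simp [arg_ofReal_of_neg hneg, Real.pi_ne_zero], ?_⟩
      simp [hneg, hneg.not_gt]
    · refine ⟨0, by simp [arg_ofReal_of_nonneg hpos.le], ?_⟩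
      simp [hpos, hpos.not_gt]
  have hm : 0 ≤ ⌊α⌋ := Int.floor_nonneg.2 hα.le
  rw [ht, Int.floor_half_sub_floor_half_neg hni]
  simp only [hparity]
  split_ifs <;> omega
end

section
/- The set of nonzero complex numbers z satisfying z^π = 2 (principal power) is exactly { 2^{1/π} · exp(2ik) : k ∈ {−1, 0, 1} }, and it has exactly 3 elements. -/
/-!
Since `z ^ π = exp (π log z)` and `2 = exp (log 2)`, the equation holds iff
`π log z = log 2 + 2πin` for some integer `n`, i.e. `log z = (log 2 + 2πin) / π`.
The principal logarithm has imaginary part in `(-π, π]`, and this one has imaginary part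
`2n`, which leaves exactly `n ∈ {-1, 0, 1}`; the three roots are distinct because their
logarithms are.
-/

open Complex Real

namespace Complex

/-- The logarithms of the `p`-th roots of `a`, indexed by the branch `n`. -/
noncomputable def logBranch (a p : ℝ) (n : ℤ) : ℂ := (Real.log a + 2 * π * I * n) / p

section
variable {a p : ℝ}

lemma logBranch_im (n : ℤ) : (logBranch a p n).im = 2 * π * n / p := by
  simp [logBranch, div_ofReal_im]

lemma logBranch_im_mem_Ioc_iff (hp : 0 < p) {n : ℤ} :
    (logBranch a p n).im ∈ Set.Ioc (-π) π ↔ -p < 2 * n ∧ 2 * n ≤ p := by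
  rw [logBranch_im, Set.mem_Ioc, lt_div_iff₀ hp, div_le_iff₀ hp]
  constructor <;> rintro ⟨h₁, h₂⟩ <;> constructor <;> nlinarith [pi_pos]

lemma logBranch_injective (hp : p ≠ 0) : Function.Injective (logBranch a p) := by
  intro m n h
  have h_im := congrArg im h
  simp only [logBranch_im] at h_im
  field_simp at h_im
  exact_mod_cast h_im

lemma exp_logBranch (ha : 0 < a) (n : ℤ) :
    exp (logBranch a p n) = ((a ^ (1 / p) : ℝ) : ℂ) * exp (2 * π * I * n / p) := by
  rw [logBranch, add_div, exp_add, Real.rpow_def_of_pos ha, ofReal_exp, mul_one_div, ofReal_div]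

lemma cpow_ofReal_eq_ofReal_iff {z : ℂ} (hz : z ≠ 0) (ha : 0 < a) (hp : p ≠ 0) :
    z ^ (p : ℂ) = a ↔ ∃ n : ℤ, log z = logBranch a p n := by
  have hpC : (p : ℂ) ≠ 0 := ofReal_ne_zero.mpr hp
  have ha_exp : (a : ℂ) = exp (Real.log a) := by rw [← ofReal_exp, Real.exp_log ha]
  rw [cpow_def_of_ne_zero hz, ha_exp, exp_eq_exp_iff_exists_int]
  refine exists_congr fun n => ?_
  rw [logBranch, eq_div_iff hpC]
  constructor <;> intro h <;> linear_combination h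

lemma ne_zero_and_cpow_ofReal_eq_ofReal_iff (ha : 0 < a) (hp : 0 < p) (z : ℂ) :
    z ≠ 0 ∧ z ^ (p : ℂ) = a ↔ ∃ n : ℤ, (-p < 2 * n ∧ 2 * n ≤ p) ∧ exp (logBranch a p n) = z := by
  constructor
  · rintro ⟨hz, hpow⟩
    obtain ⟨n, hn⟩ := (cpow_ofReal_eq_ofReal_iff hz ha hp.ne').mp hpow
    refine ⟨n, (logBranch_im_mem_Ioc_iff (a := a) hp).mp ?_, by rw [← hn, exp_log hz]⟩
    rw [← hn, log_im]
    exact ⟨neg_pi_lt_arg z, arg_le_pi z⟩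
  · rintro ⟨n, hn, rfl⟩
    obtain ⟨him₁, him₂⟩ := (logBranch_im_mem_Ioc_iff hp).mpr hn
    refine ⟨exp_ne_zero _, (cpow_ofReal_eq_ofReal_iff (exp_ne_zero _) ha hp.ne').mpr ⟨n, ?_⟩⟩
    exact log_exp him₁ him₂

lemma injOn_exp_logBranch (hp : 0 < p) :
    Set.InjOn (fun n => exp (logBranch a p n)) {n : ℤ | -p < 2 * n ∧ 2 * n ≤ p} := by
  intro m hm n hn h
  obtain ⟨hm₁, hm₂⟩ := (logBranch_im_mem_Ioc_iff (a := a) hp).mpr hm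
  obtain ⟨hn₁, hn₂⟩ := (logBranch_im_mem_Ioc_iff (a := a) hp).mpr hn
  apply logBranch_injective (a := a) hp.ne'
  rw [← log_exp hm₁ hm₂, ← log_exp hn₁ hn₂]
  exact congrArg log h

end

end Complex

lemma Int.setOf_neg_pi_lt_two_mul_le_pi : {n : ℤ | -π < 2 * n ∧ 2 * n ≤ π} = {-1, 0, 1} := by
  ext n
  have h₃ := pi_gt_three
  have h₄ := pi_lt_four
  simp only [Set.mem_insert_iff, Set.mem_singleton_iff]
  constructor
  · rintro ⟨h₁, h₂⟩
    have : -2 < n := by exact_mod_cast (by linarith : (-2 : ℝ) < n)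
    have : n < 2 := by exact_mod_cast (by linarith : (n : ℝ) < 2)
    omega
  · rintro (rfl | rfl | rfl) <;> constructor <;> push_cast <;> linarith

/-- The nonzero complex solutions of the principal-power equation `z ^ π = 2` are
exactly `2^(1/π) · exp(2ik)` for `k ∈ {-1, 0, 1}`, three values in all. -/
theorem roots_z_pow_pi_eq_two :
    {z : ℂ | z ≠ 0 ∧ z ^ (Real.pi : ℂ) = 2} =
      (fun k : ℤ => (((2 : ℝ) ^ (1 / Real.pi) : ℝ) : ℂ) *
        Complex.exp (2 * Complex.I * k)) '' {-1, 0, 1} ∧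
    {z : ℂ | z ≠ 0 ∧ z ^ (Real.pi : ℂ) = 2}.ncard = 3 := by
  have hroots : {z : ℂ | z ≠ 0 ∧ z ^ (Real.pi : ℂ) = 2} =
      (fun n => exp (logBranch 2 π n)) '' {-1, 0, 1} := by
    ext z
    rw [← Int.setOf_neg_pi_lt_two_mul_le_pi]
    exact_mod_cast ne_zero_and_cpow_ofReal_eq_ofReal_iff two_pos pi_pos z
  refine ⟨hroots.trans (Set.image_congr fun n _ => ?_), ?_⟩
  · rw [exp_logBranch two_pos]
    congr 2
    field_simp
  · have hinj := injOn_exp_logBranch (a := 2) pi_pos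
    rw [Int.setOf_neg_pi_lt_two_mul_le_pi] at hinj
    rw [hroots, hinj.ncard_image]
    exact Set.ncard_eq_three.mpr ⟨-1, 0, 1, by norm_num, by norm_num, by norm_num, rfl⟩
end

section
/- The set of nonzero complex numbers z satisfying z^π = −2 (principal power) is exactly { 2^{1/π} · exp(i(2k+1)) : k ∈ {−2, −1, 0, 1} }, and it has exactly 4 elements. -/
/-!
`z ^ π = -2` says `exp (π log z) = exp (log 2 + π i)`, i.e. `log z = (log 2 + (2n + 1) π i) / π`
for some integer `n`. As `log z` is the principal logarithm, its imaginary part `2n + 1` must lie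
in `(-π, π]`, which leaves `n ∈ {-2, -1, 0, 1}`; conversely each of these values is the principal
logarithm of its exponential, so the four exponentials are solutions and pairwise distinct.
-/

open Complex Real

namespace Complex

section OfRealPow

variable {p : ℝ} {c : ℂ}

noncomputable def cpowOfRealBranch (c : ℂ) (p : ℝ) (n : ℤ) : ℂ :=
  (log c + n * (2 * π * I)) / p

theorem cpowOfRealBranch_im (c : ℂ) (p : ℝ) (n : ℤ) :
    (cpowOfRealBranch c p n).im = (arg c + 2 * π * n) / p := by
  simp [cpowOfRealBranch, div_ofReal_im, log_im]
  ring

theorem cpow_ofReal_eq_iff_exists_log_eq (hp : p ≠ 0) (hc : c ≠ 0) {z : ℂ} (hz : z ≠ 0) :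
    z ^ (p : ℂ) = c ↔ ∃ n : ℤ, log z = cpowOfRealBranch c p n := by
  conv_lhs => rw [cpow_def_of_ne_zero hz, ← exp_log hc, exp_eq_exp_iff_exists_int]
  exact exists_congr fun n => (eq_div_iff (ofReal_ne_zero.mpr hp)).symm

theorem setOf_cpow_ofReal_eq (hp : p ≠ 0) (hc : c ≠ 0) :
    {z : ℂ | z ≠ 0 ∧ z ^ (p : ℂ) = c} =
      (fun n => exp (cpowOfRealBranch c p n)) ''
        {n | (cpowOfRealBranch c p n).im ∈ Set.Ioc (-π) π} := by
  ext z
  constructor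
  · rintro ⟨hz, hzc⟩
    obtain ⟨n, hn⟩ := (cpow_ofReal_eq_iff_exists_log_eq hp hc hz).mp hzc
    refine ⟨n, ?_, show exp _ = z by rw [← hn, exp_log hz]⟩
    show (cpowOfRealBranch c p n).im ∈ Set.Ioc (-π) π
    rw [← hn]
    exact ⟨neg_pi_lt_log_im z, log_im_le_pi z⟩
  · rintro ⟨n, ⟨hlt, hle⟩, rfl⟩
    refine ⟨exp_ne_zero _, (cpow_ofReal_eq_iff_exists_log_eq hp hc (exp_ne_zero _)).mpr ⟨n, ?_⟩⟩
    exact log_exp hlt hle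

theorem injOn_exp_cpowOfRealBranch (hp : p ≠ 0) :
    Set.InjOn (fun n => exp (cpowOfRealBranch c p n))
      {n | (cpowOfRealBranch c p n).im ∈ Set.Ioc (-π) π} := by
  rintro m ⟨hm₁, hm₂⟩ n ⟨hn₁, hn₂⟩ h
  have := congrArg im (exp_inj_of_neg_pi_lt_of_le_pi hm₁ hm₂ hn₁ hn₂ h)
  rw [cpowOfRealBranch_im, cpowOfRealBranch_im, div_left_inj' hp] at this
  exact_mod_cast mul_left_cancel₀ (by positivity : 2 * π ≠ 0) (add_left_cancel this)

end OfRealPow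

theorem log_neg_two : log (-2) = Real.log 2 + π * I := by
  rw [show (-2 : ℂ) = (2 : ℝ) * (-1) by push_cast; ring, log_ofReal_mul two_pos (by norm_num),
    log_neg_one]

theorem arg_neg_two : arg (-2) = π := by
  rw [← log_im, log_neg_two, add_im, ofReal_im, mul_im, ofReal_re, ofReal_im, I_re, I_im]
  ring

theorem exp_cpowOfRealBranch_neg_two_pi (n : ℤ) :
    exp (cpowOfRealBranch (-2) π n) = ((2 ^ (1 / π) : ℝ) : ℂ) * exp (I * (2 * n + 1)) := by
  rw [cpowOfRealBranch, log_neg_two, Real.rpow_def_of_pos two_pos, ofReal_exp, ← exp_add]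
  congr 1
  push_cast
  field_simp
  ring

theorem cpowOfRealBranch_neg_two_pi_im (n : ℤ) : (cpowOfRealBranch (-2) π n).im = 2 * n + 1 := by
  rw [cpowOfRealBranch_im, arg_neg_two]
  field_simp
  ring

end Complex

theorem Int.two_mul_add_one_mem_Ioc_neg_pi_pi_iff {n : ℤ} :
    2 * (n : ℝ) + 1 ∈ Set.Ioc (-π) π ↔ n ∈ ({-2, -1, 0, 1} : Set ℤ) := by
  have hπ_gt := pi_gt_three
  have hπ_lt := pi_lt_d2
  constructor
  · rintro ⟨hlt, hle⟩
    have hlo : -2 ≤ n := by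
      by_contra! h
      have : (n : ℝ) ≤ -3 := by exact_mod_cast Int.le_sub_one_of_lt h
      linarith
    have hhi : n ≤ 1 := by
      by_contra! h
      have : (2 : ℝ) ≤ n := by exact_mod_cast h
      linarith
    simp only [Set.mem_insert_iff, Set.mem_singleton_iff]
    omega
  · rintro (rfl | rfl | rfl | rfl) <;> norm_num <;> constructor <;> linarith

/-- The nonzero complex solutions of the principal-power equation `z ^ π = -2` are
exactly `2^(1/π) · exp(i(2k+1))` for `k ∈ {-2, -1, 0, 1}`, four values in all. -/
theorem roots_z_pow_pi_eq_neg_two :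
    {z : ℂ | z ≠ 0 ∧ z ^ (Real.pi : ℂ) = -2} =
      (fun k : ℤ => (((2 : ℝ) ^ (1 / Real.pi) : ℝ) : ℂ) *
        Complex.exp (Complex.I * (2 * k + 1))) '' {-2, -1, 0, 1} ∧
    {z : ℂ | z ≠ 0 ∧ z ^ (Real.pi : ℂ) = -2}.ncard = 4 := by
  have hdom : {n : ℤ | (cpowOfRealBranch (-2) π n).im ∈ Set.Ioc (-π) π} = {-2, -1, 0, 1} := by
    ext n
    rw [Set.mem_ofPred_eq, cpowOfRealBranch_neg_two_pi_im,
      Int.two_mul_add_one_mem_Ioc_neg_pi_pi_iff]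
  have hset := setOf_cpow_ofReal_eq pi_ne_zero (by norm_num : (-2 : ℂ) ≠ 0)
  have hinj := injOn_exp_cpowOfRealBranch (c := -2) pi_ne_zero
  simp only [hdom, exp_cpowOfRealBranch_neg_two_pi] at hset hinj
  refine ⟨hset, ?_⟩
  rw [hset, hinj.ncard_image, Set.ncard_eq_toFinset_card']
  rfl
end

section
/- Let n be a natural number with n ≥ 2, let a₁, a₀ be real numbers with a₁ ≥ 0 and a₀ > 0, and let x* be the unique positive real number with (x*)^n = a₁·x* + a₀. Define g : ℝ → ℝ on positive reals by g(x) = (a₁·x + a₀)^{1/n} (the positive real n-th root). Then for every initial value x₀ > 0, the sequence of iterates j ↦ g^[j](x₀) converges to x*. -/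
open Filter Topology Set

/-!
Dividing by `x`, the equation `x ^ n = a₁ x + a₀` becomes `q x = 0` with
`q x = x ^ (n - 1) - a₁ - a₀ / x` strictly increasing on `(0, ∞)`; so `x ^ n < a₁ x + a₀`
exactly below the root `x*` and `x ^ n > a₁ x + a₀` exactly above it. Hence `g` moves every
point of `(0, x*]` up but not past `x*`, and every point of `[x*, ∞)` down but not past `x*`.
The iterates thus form a bounded monotone sequence; its limit is a positive fixed point of the
continuous map `g`, i.e. a positive root, i.e. `x*`.
-/

section Iteration

variable {α : Type*} [ConditionallyCompleteLinearOrder α] [TopologicalSpace α] [OrderTopology α]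
  {f : α → α} {a b : α}

theorem tendsto_iterate_of_mapsTo_Icc_of_le_map (hab : a ≤ b)
    (hmaps : MapsTo f (Icc a b) (Icc a b)) (hle : ∀ x ∈ Icc a b, x ≤ f x)
    (hcont : ContinuousOn f (Icc a b))
    (hfix : ∀ x ∈ Icc a b, f x = x → x = b) :
    Tendsto (fun j => f^[j] a) atTop (𝓝 b) := by
  set u : ℕ → α := fun j => f^[j] a
  have hsucc : ∀ j, u (j + 1) = f (u j) := fun j => Function.iterate_succ_apply' f j a
  have hmem : ∀ j, u j ∈ Icc a b := fun j => hmaps.iterate j ⟨le_rfl, hab⟩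
  have hmono : Monotone u := monotone_nat_of_le_succ fun j => hsucc j ▸ hle _ (hmem j)
  have hbdd : BddAbove (range u) := ⟨b, forall_mem_range.2 fun j => (hmem j).2⟩
  have hlim : Tendsto u atTop (𝓝 (⨆ j, u j)) := tendsto_atTop_ciSup hmono hbdd
  have hL : (⨆ j, u j) ∈ Icc a b := isClosed_Icc.mem_of_tendsto hlim (Eventually.of_forall hmem)
  have hlim_succ : Tendsto (fun j => u (j + 1)) atTop (𝓝 (f (⨆ j, u j))) := by
    simp only [hsucc]
    exact (hcont _ hL).tendsto.comp (tendsto_nhdsWithin_iff.2 ⟨hlim, Eventually.of_forall hmem⟩)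
  have hfixed : f (⨆ j, u j) = ⨆ j, u j :=
    tendsto_nhds_unique hlim_succ (hlim.comp (tendsto_add_atTop_nat 1))
  rwa [hfix _ hL hfixed] at hlim

theorem tendsto_iterate_of_mapsTo_Icc_of_map_le (hba : b ≤ a)
    (hmaps : MapsTo f (Icc b a) (Icc b a)) (hle : ∀ x ∈ Icc b a, f x ≤ x)
    (hcont : ContinuousOn f (Icc b a))
    (hfix : ∀ x ∈ Icc b a, f x = x → x = b) :
    Tendsto (fun j => f^[j] a) atTop (𝓝 b) :=
  tendsto_iterate_of_mapsTo_Icc_of_le_map (α := αᵒᵈ) (f := f) hba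
    (fun _ hx => (hmaps hx.symm).symm) (fun x hx => hle x hx.symm)
    (hcont.mono fun _ hx => hx.symm) (fun x hx => hfix x hx.symm)

end Iteration

section Trinomial

variable {n : ℕ} {a₁ a₀ xs x y : ℝ}

theorem strictMonoOn_trinomial_div (hn : n ≠ 0) (h₀ : 0 < a₀) :
    StrictMonoOn (fun x : ℝ => (x ^ n - (a₁ * x + a₀)) / x) (Ioi 0) := by
  obtain ⟨m, rfl⟩ := Nat.exists_eq_succ_of_ne_zero hn
  have hform : ∀ x : ℝ, 0 < x →
      (x ^ (m + 1) - (a₁ * x + a₀)) / x = x ^ m - a₁ - a₀ / x := by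
    intro x hx
    field_simp
    ring
  intro x (hx : 0 < x) y (hy : 0 < y) hxy
  simp only [hform x hx, hform y hy]
  have hpow : x ^ m ≤ y ^ m := pow_le_pow_left₀ hx.le hxy.le m
  have hdiv : a₀ / y < a₀ / x := div_lt_div_of_pos_left h₀ hx hxy
  linarith

theorem pow_le_iff_le_root (hn : n ≠ 0) (h₀ : 0 < a₀) (hxs : 0 < xs)
    (hroot : xs ^ n = a₁ * xs + a₀) (hx : 0 < x) : x ^ n ≤ a₁ * x + a₀ ↔ x ≤ xs := by
  have h := (strictMonoOn_trinomial_div (a₁ := a₁) hn h₀).le_iff_le hx hxs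
  rwa [hroot, sub_self, zero_div, div_le_iff₀ hx, zero_mul, sub_nonpos] at h

theorem le_pow_iff_root_le (hn : n ≠ 0) (h₀ : 0 < a₀) (hxs : 0 < xs)
    (hroot : xs ^ n = a₁ * xs + a₀) (hx : 0 < x) : a₁ * x + a₀ ≤ x ^ n ↔ xs ≤ x := by
  have h := (strictMonoOn_trinomial_div (a₁ := a₁) hn h₀).le_iff_le hxs hx
  rwa [hroot, sub_self, zero_div, le_div_iff₀ hx, zero_mul, sub_nonneg] at h

theorem le_iff_le_root_of_pow_eq (hn : n ≠ 0) (h₀ : 0 < a₀) (hxs : 0 < xs)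
    (hroot : xs ^ n = a₁ * xs + a₀) (hx : 0 < x) (hy : 0 ≤ y)
    (hyn : y ^ n = a₁ * x + a₀) :
    x ≤ y ↔ x ≤ xs := by
  rw [← pow_le_pow_iff_left₀ hx.le hy hn, hyn, pow_le_iff_le_root hn h₀ hxs hroot hx]

theorem le_iff_root_le_of_pow_eq (hn : n ≠ 0) (h₀ : 0 < a₀) (hxs : 0 < xs)
    (hroot : xs ^ n = a₁ * xs + a₀) (hx : 0 < x) (hy : 0 ≤ y)
    (hyn : y ^ n = a₁ * x + a₀) :
    y ≤ x ↔ xs ≤ x := by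
  rw [← pow_le_pow_iff_left₀ hy hx.le hn, hyn, le_pow_iff_root_le hn h₀ hxs hroot hx]

end Trinomial

section Radical

variable {n : ℕ} {a₁ a₀ : ℝ} {g : ℝ → ℝ}

theorem radical_pos (h₁ : 0 ≤ a₁) (h₀ : 0 < a₀)
    (hg : ∀ x : ℝ, 0 < x → g x = (a₁ * x + a₀) ^ ((1 : ℝ) / n)) {x : ℝ} (hx : 0 < x) :
    0 < g x :=
  hg x hx ▸ Real.rpow_pos_of_pos (by positivity) _

theorem radical_pow (hn : n ≠ 0) (h₁ : 0 ≤ a₁) (h₀ : 0 < a₀)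
    (hg : ∀ x : ℝ, 0 < x → g x = (a₁ * x + a₀) ^ ((1 : ℝ) / n)) {x : ℝ} (hx : 0 < x) :
    g x ^ n = a₁ * x + a₀ := by
  rw [hg x hx, one_div, Real.rpow_inv_natCast_pow (by positivity) hn]

theorem monotoneOn_radical (h₁ : 0 ≤ a₁) (h₀ : 0 < a₀)
    (hg : ∀ x : ℝ, 0 < x → g x = (a₁ * x + a₀) ^ ((1 : ℝ) / n)) :
    MonotoneOn g (Ioi 0) := by
  intro x (hx : 0 < x) y (hy : 0 < y) hxy
  rw [hg x hx, hg y hy]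
  exact Real.rpow_le_rpow (by positivity) (by gcongr) (by positivity)

theorem continuousOn_radical
    (hg : ∀ x : ℝ, 0 < x → g x = (a₁ * x + a₀) ^ ((1 : ℝ) / n)) :
    ContinuousOn g (Ioi 0) :=
  (Continuous.rpow_const (by fun_prop) fun _ => Or.inr (by positivity)).continuousOn.congr hg

end Radical

/-- For `n ≥ 2`, `a₁ ≥ 0`, `a₀ > 0`, let `x*` be the unique positive solution of
`x ^ n = a₁·x + a₀`, and let `g` agree with `x ↦ (a₁·x + a₀) ^ (1/n)` on positive
reals. Then for every positive initial value the iterates of `g` converge to `x*`. -/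
theorem iteration_converges_to_root (n : ℕ) (hn : 2 ≤ n) (a₁ a₀ : ℝ)
    (h₁ : 0 ≤ a₁) (h₀ : 0 < a₀) (xs : ℝ) (hxs : 0 < xs)
    (hroot : xs ^ n = a₁ * xs + a₀) (g : ℝ → ℝ)
    (hg : ∀ x : ℝ, 0 < x → g x = (a₁ * x + a₀) ^ ((1 : ℝ) / n)) :
    ∀ x₀ : ℝ, 0 < x₀ → Tendsto (fun j => g^[j] x₀) atTop (𝓝 xs) := by
  intro x₀ hx₀
  have hn0 : n ≠ 0 := by omega
  have hup : ∀ x, 0 < x → (x ≤ g x ↔ x ≤ xs) := fun x hx =>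
    le_iff_le_root_of_pow_eq hn0 h₀ hxs hroot hx (radical_pos h₁ h₀ hg hx).le
      (radical_pow hn0 h₁ h₀ hg hx)
  have hdown : ∀ x, 0 < x → (g x ≤ x ↔ xs ≤ x) := fun x hx =>
    le_iff_root_le_of_pow_eq hn0 h₀ hxs hroot hx (radical_pos h₁ h₀ hg hx).le
      (radical_pow hn0 h₁ h₀ hg hx)
  have hfix : ∀ x, 0 < x → g x = x → x = xs := fun x hx h =>
    le_antisymm ((hup x hx).1 h.ge) ((hdown x hx).1 h.le)
  have hgxs : g xs = xs := le_antisymm ((hdown xs hxs).2 le_rfl) ((hup xs hxs).2 le_rfl)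
  have hmono := monotoneOn_radical h₁ h₀ hg
  rcases le_total x₀ xs with hle | hge
  · have hpos : Icc x₀ xs ⊆ Ioi 0 := fun x hx => hx₀.trans_le hx.1
    refine tendsto_iterate_of_mapsTo_Icc_of_le_map hle (fun x hx => ⟨?_, ?_⟩)
      (fun x hx => (hup x (hpos hx)).2 hx.2) ((continuousOn_radical hg).mono hpos)
      (fun x hx => hfix x (hpos hx))
    · exact hx.1.trans ((hup x (hpos hx)).2 hx.2)
    · exact hgxs ▸ hmono (hpos hx) hxs hx.2
  · have hpos : Icc xs x₀ ⊆ Ioi 0 := fun x hx => hxs.trans_le hx.1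
    refine tendsto_iterate_of_mapsTo_Icc_of_map_le hge (fun x hx => ⟨?_, ?_⟩)
      (fun x hx => (hdown x (hpos hx)).2 hx.1) ((continuousOn_radical hg).mono hpos)
      (fun x hx => hfix x (hpos hx))
    · exact hgxs ▸ hmono hxs (hpos hx) hx.1
    · exact ((hdown x (hpos hx)).2 hx.1).trans hx.2
end

section
/- There exists a real number x with −34 < x < −33.9 such that ζ(x) = x, where ζ is the Riemann zeta function (evaluated at the real number x regarded as a complex number). -/
/-!
On the real axis `ζ` is real and continuous away from `1`, so it suffices to see that `ζ(x) - x`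
changes sign on `[-34, -33.9]`. At the trivial zero `-34` it equals `34`. At `-33.9` the functional
equation gives `ζ(-33.9) = 2 (2π)^(-34.9) Γ(34.9) cos(17.45 π) ζ(34.9)`, where `cos(17.45 π) ≤ -1/10`,
`ζ(34.9) ≥ 1` and `Γ(34.9) ≥ 33!` overwhelms `(2π)^34.9 ≤ 8^35`, so `ζ(-33.9)` is below `-10^4`.
-/

open Real Nat

theorem riemannZeta_ofReal_eq_re (x : ℝ) : riemannZeta x = ((riemannZeta x).re : ℂ) :=
  (Complex.conj_eq_iff_re.mp (by rw [← riemannZeta_conj, Complex.conj_ofReal])).symm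

theorem continuousAt_riemannZeta_ofReal_re {x : ℝ} (hx : x ≠ 1) :
    ContinuousAt (fun y : ℝ ↦ (riemannZeta y).re) x :=
  Complex.continuous_re.continuousAt.comp <|
    (differentiableAt_riemannZeta (by exact_mod_cast hx)).continuousAt.comp
      Complex.continuous_ofReal.continuousAt

theorem one_le_riemannZeta_ofReal_re {s : ℝ} (hs : 1 < s) : 1 ≤ (riemannZeta s).re := by
  have hterm (n : ℕ) : 1 / ((n : ℂ) + 1) ^ (s : ℂ) = ((1 / ((n : ℝ) + 1) ^ s : ℝ) : ℂ) := by
    rw [Complex.ofReal_div, Complex.ofReal_cpow (by positivity)]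
    push_cast; rfl
  have hsum : Summable fun n : ℕ ↦ 1 / ((n : ℝ) + 1) ^ s := by
    simpa using (summable_nat_add_iff 1).mpr (Real.summable_one_div_nat_rpow.mpr hs)
  rw [zeta_eq_tsum_one_div_nat_add_one_cpow (by simpa using hs), tsum_congr hterm,
    ← Complex.ofReal_tsum, Complex.ofReal_re]
  simpa using hsum.le_tsum 0 fun n _ ↦ by positivity

theorem riemannZeta_one_sub_ofReal_re {s : ℝ} (hs : 1 < s) :
    (riemannZeta (1 - s : ℝ)).re =
      2 * (2 * π) ^ (-s) * Gamma s * cos (π * s / 2) * (riemannZeta s).re := by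
  have hnat (n : ℕ) : (s : ℂ) ≠ -n := by
    rw [← Complex.ofReal_natCast, ← Complex.ofReal_neg, Ne, Complex.ofReal_inj]
    linarith [(n.cast_nonneg : (0 : ℝ) ≤ n)]
  rw [Complex.ofReal_sub, Complex.ofReal_one,
    riemannZeta_one_sub hnat (by exact_mod_cast hs.ne'), riemannZeta_ofReal_eq_re s,
    Complex.Gamma_ofReal]
  have hpow : (2 * (π : ℂ)) ^ (-(s : ℂ)) = ((2 * π) ^ (-s) : ℝ) := by
    rw [Complex.ofReal_cpow (by positivity)]; push_cast; rfl
  rw [hpow]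
  norm_cast

theorem Real.factorial_le_Gamma {n : ℕ} (hn : 1 ≤ n) {x : ℝ} (hx : n + 1 ≤ x) :
    (n ! : ℝ) ≤ Gamma x := by
  rw [← Gamma_nat_eq_factorial]
  have h2 : (2 : ℝ) ≤ n + 1 := by norm_cast; omega
  exact Gamma_strictMonoOn_Ici.monotoneOn h2 (h2.trans hx) hx

theorem cos_pi_mul_34_9_div_two_le : cos (π * 34.9 / 2) ≤ -(1 / 10) := by
  rw [show π * 34.9 / 2 = -(π / 20 + π / 2) + (9 : ℤ) * (2 * π) by push_cast; ring,
    cos_add_int_mul_two_pi, cos_neg, cos_add_pi_div_two, neg_le_neg_iff]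
  have := mul_le_sin (x := π / 20) (by positivity) (by linarith [pi_pos])
  convert this using 1; field_simp; norm_num

theorem riemannZeta_re_neg_33_9_lt : (riemannZeta (-33.9 : ℝ)).re < -33.9 := by
  have h := riemannZeta_one_sub_ofReal_re (s := 34.9) (by norm_num)
  rw [show (1 : ℝ) - 34.9 = -33.9 by norm_num] at h
  have hpow : (8 ^ 35 : ℝ)⁻¹ ≤ (2 * π) ^ (-34.9 : ℝ) := by
    rw [rpow_neg (by positivity)]
    refine inv_anti₀ (by positivity) ?_
    calc (2 * π) ^ (34.9 : ℝ) ≤ 8 ^ (34.9 : ℝ) := by gcongr; linarith [pi_le_four]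
      _ ≤ 8 ^ ((35 : ℕ) : ℝ) := rpow_le_rpow_of_exponent_le (by norm_num) (by norm_num)
      _ = 8 ^ 35 := rpow_natCast _ _
  have hGamma : (33 ! : ℝ) ≤ Gamma 34.9 := factorial_le_Gamma (by norm_num) (by norm_num)
  have hcos := cos_pi_mul_34_9_div_two_le
  have hzeta := one_le_riemannZeta_ofReal_re (s := 34.9) (by norm_num)
  have hpos : 0 ≤ 2 * (2 * π) ^ (-34.9 : ℝ) * Gamma 34.9 * (riemannZeta (34.9 : ℝ)).re := by
    have : 0 < Gamma 34.9 := Gamma_pos_of_pos (by norm_num)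
    positivity
  calc (riemannZeta (-33.9 : ℝ)).re
      = 2 * (2 * π) ^ (-34.9 : ℝ) * Gamma 34.9 * (riemannZeta (34.9 : ℝ)).re
          * cos (π * 34.9 / 2) := by rw [h]; ring
    _ ≤ 2 * (2 * π) ^ (-34.9 : ℝ) * Gamma 34.9 * (riemannZeta (34.9 : ℝ)).re * -(1 / 10) :=
        mul_le_mul_of_nonneg_left hcos hpos
    _ ≤ 2 * (8 ^ 35 : ℝ)⁻¹ * 33 ! * 1 * -(1 / 10) :=
        mul_le_mul_of_nonpos_right (by gcongr) (by norm_num)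
    _ < -33.9 := by norm_num [Nat.factorial]

/-- The Riemann zeta function has a real fixed point between `-34` and `-33.9`. -/
theorem zeta_fixed_point_near_neg_34 :
    ∃ x : ℝ, -34 < x ∧ x < -33.9 ∧ riemannZeta (x : ℂ) = (x : ℂ) := by
  set g : ℝ → ℝ := fun x ↦ (riemannZeta x).re - x
  have hg : ContinuousOn g (Set.Icc (-34) (-33.9)) := fun x hx ↦
    ((continuousAt_riemannZeta_ofReal_re (by linarith [hx.2])).continuousWithinAt).sub
      continuousWithinAt_id
  have hleft : 0 < g (-34) := by
    have hzero : riemannZeta ((-34 : ℝ) : ℂ) = 0 := by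
      rw [show ((-34 : ℝ) : ℂ) = -2 * ((16 : ℕ) + 1) by push_cast; norm_num]
      exact riemannZeta_neg_two_mul_nat_add_one 16
    simp only [g, hzero, Complex.zero_re]
    norm_num
  have hright : g (-33.9) < 0 := sub_neg.mpr riemannZeta_re_neg_33_9_lt
  obtain ⟨x, ⟨hx34, hx339⟩, hgx⟩ :=
    intermediate_value_Ioo' (by norm_num) hg ⟨hright, hleft⟩
  refine ⟨x, hx34, hx339, ?_⟩
  rw [riemannZeta_ofReal_eq_re, sub_eq_zero.mp hgx]
end
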